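/- If a vertex v of T has exactly 6 neighbours, then these neighbours are six equidistant points forming a regular hexagon around v: they can be ordered n₁, …, n₆ so that for some ρ > 0, dist(v, nᵢ) = ρ for all i and dist(nᵢ, n_{i+1}) = ρ for all i (indices modulo 6), i.e., consecutive neighbours subtend an angle of exactly π/3 at v. -/

import Mathlib

/-- A rooted tree on a vertex type `V`, given by a parent function under which
every vertex reaches the root. -/
structure ParentTree (V : Type) where
  root : V
  parent : V → V
  parent_root : parent root = root
  reaches_root : ∀ v, ∃ k, parent^[k] v = root

namespace ParentTree

variable {V : Type}

/-- The set `C(u)` of children of `u`. -/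
def children (T : ParentTree V) (u : V) : Set V := {v | T.parent v = u ∧ v ≠ u}

/-- The set `T(u)` of descendants of `u` (including `u` itself). -/
def desc (T : ParentTree V) (u : V) : Set V := {b | ∃ k, T.parent^[k] b = u}

/-- For a set `U` of siblings, `T(U) = ⋃_{u ∈ U} T(u)`. -/
def descU (T : ParentTree V) (U : Set V) : Set V := ⋃ u ∈ U, T.desc u

end ParentTree

/-- The total weight of the tree `T`: the sum of distances over its edges. -/
noncomputable def treeWeight {V X : Type} [Fintype V] [DecidableEq V] [MetricSpace X]
    (T : ParentTree V) (f : V → X) : ℝ :=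
  ∑ v ∈ Finset.univ.filter (fun v => v ≠ T.root), dist (f v) (f (T.parent v))

/-- `T` is a minimum spanning tree: among all trees with the same vertex set it
minimizes the sum of distances over its edges. -/
def IsMST {V X : Type} [Fintype V] [DecidableEq V] [MetricSpace X]
    (T : ParentTree V) (f : V → X) : Prop :=
  ∀ T' : ParentTree V, treeWeight T f ≤ treeWeight T' f

/-- `a` and `v` are neighbours in `T`, i.e. joined by an edge of `T`. -/
def Nbr {V : Type} (T : ParentTree V) (a v : V) : Prop :=
  a ≠ v ∧ (T.parent a = v ∨ T.parent v = a)


/-!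
If `a` and `b` are neighbours of `v`, reattaching one of the edges `av`, `bv` to run between
`a` and `b` yields another spanning tree, so minimality gives `dist a v ≤ dist a b`. Hence in
the triangle `v a b` the side `ab` is a longest one and the angle at `v` is at least `π / 3`.
Six such angles around `v` fill the full angle `2π`, so each is exactly `π / 3`, and equality
in the law of cosines makes every triangle `v nᵢ nᵢ₊₁` equilateral.
-/

open Function Real InnerProductGeometry

namespace ParentTree

variable {V : Type} (T : ParentTree V)

theorem eq_root_of_iterate_eq_self {x : V} {j : ℕ} (hj : 0 < j) (hx : T.parent^[j] x = x) :
    x = T.root := by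
  obtain ⟨k, hk⟩ := T.reaches_root x
  have hper : T.parent^[j * k] x = x := (IsPeriodicPt.mul_const hx k).eq
  calc x = T.parent^[j * k - k] (T.parent^[k] x) := by
        rw [← iterate_add_apply, Nat.sub_add_cancel (Nat.le_mul_of_pos_left k hj), hper]
    _ = T.root := by rw [hk, iterate_fixed T.parent_root]

theorem ne_root_of_parent_ne {a : V} (h : T.parent a ≠ a) : a ≠ T.root := by
  rintro rfl
  exact h T.parent_root

theorem iterate_parent_notMem_desc {a : V} (ha : a ≠ T.root) (n : ℕ) :
    T.parent^[n + 1] a ∉ T.desc a := by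
  rintro ⟨k, hk⟩
  rw [← iterate_add_apply] at hk
  exact ha (T.eq_root_of_iterate_eq_self (by omega) hk)

theorem notMem_desc_of_parent {a b : V} (hba : b ≠ a) (hb : T.parent b ∉ T.desc a) :
    b ∉ T.desc a := by
  rintro ⟨_ | k, hk⟩
  · exact hba hk
  · exact hb ⟨k, hk⟩

variable [DecidableEq V]

theorem iterate_update_of_notMem_desc {a x : V} (c : V) (hx : x ∉ T.desc a) (k : ℕ) :
    (update T.parent a c)^[k] x = T.parent^[k] x := by
  induction k with
  | zero => rfl
  | succ k ih =>
    rw [iterate_succ_apply', iterate_succ_apply', ih, update_of_ne fun h => hx ⟨k, h⟩]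

theorem exists_iterate_update_eq_root {a b : V} (hb : b ∉ T.desc a) (w : V) :
    ∃ m, (update T.parent a b)^[m] w = T.root := by
  obtain ⟨k, hk⟩ := T.reaches_root w
  induction k generalizing w with
  | zero => exact ⟨0, hk⟩
  | succ k ih =>
    by_cases hwa : w = a
    · obtain ⟨m, hm⟩ := T.reaches_root b
      refine ⟨m + 1, ?_⟩
      rw [iterate_succ_apply, hwa, update_self, T.iterate_update_of_notMem_desc b hb, hm]
    · obtain ⟨m, hm⟩ := ih (T.parent w) (by rwa [iterate_succ_apply] at hk)
      exact ⟨m + 1, by rw [iterate_succ_apply, update_of_ne hwa, hm]⟩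

def reparent (a b : V) (ha : a ≠ T.root) (hb : b ∉ T.desc a) : ParentTree V where
  root := T.root
  parent := update T.parent a b
  parent_root := by rw [update_of_ne ha.symm, T.parent_root]
  reaches_root := T.exists_iterate_update_eq_root hb

@[simp]
theorem reparent_parent {a b : V} (ha : a ≠ T.root) (hb : b ∉ T.desc a) :
    (T.reparent a b ha hb).parent = update T.parent a b := rfl

theorem treeWeight_reparent [Fintype V] {X : Type} [MetricSpace X] (f : V → X) {a b : V}
    (ha : a ≠ T.root) (hb : b ∉ T.desc a) :
    treeWeight (T.reparent a b ha hb) f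
      = treeWeight T f - dist (f a) (f (T.parent a)) + dist (f a) (f b) := by
  set s := Finset.univ.filter (· ≠ T.root)
  have hmem : a ∈ s := by simpa [s] using ha
  have hrest : ∑ w ∈ s \ {a}, dist (f w) (f (update T.parent a b w))
      = ∑ w ∈ s \ {a}, dist (f w) (f (T.parent w)) :=
    Finset.sum_congr rfl fun w hw => by
      rw [update_of_ne (Finset.notMem_singleton.1 (Finset.mem_sdiff.1 hw).2)]
  change ∑ w ∈ s, dist (f w) (f (update T.parent a b w))
    = ∑ w ∈ s, dist (f w) (f (T.parent w)) - _ + _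
  rw [Finset.sum_eq_sum_sdiff_singleton_add hmem,
    Finset.sum_eq_sum_sdiff_singleton_add hmem fun w => dist (f w) (f (T.parent w)),
    update_self, hrest]
  ring

end ParentTree

namespace IsMST

variable {V X : Type} [Fintype V] [DecidableEq V] [MetricSpace X] {T : ParentTree V}
  {f : V → X}

theorem dist_parent_le (hmst : IsMST T f) {a b : V} (ha : a ≠ T.root) (hb : b ∉ T.desc a) :
    dist (f a) (f (T.parent a)) ≤ dist (f a) (f b) := by
  have := hmst (T.reparent a b ha hb)
  rw [T.treeWeight_reparent f ha hb] at this
  linarith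

/-- Exchange the edges `av`, `vb` for `ab`, `va`, as two reparentings:
`a` to `b`, then `v` to `a`. -/
theorem dist_parent_le_of_parent_eq (hmst : IsMST T f) {a v : V} (hav : a ≠ v)
    (hpa : T.parent a = v) (hv : T.parent v ≠ v) :
    dist (f v) (f (T.parent v)) ≤ dist (f a) (f (T.parent v)) := by
  set b := T.parent v
  have ha : a ≠ T.root := T.ne_root_of_parent_ne (hpa ▸ hav.symm)
  have hv_root : v ≠ T.root := T.ne_root_of_parent_ne hv
  have hb : b ∉ T.desc a := by
    simpa [hpa] using T.iterate_parent_notMem_desc ha 1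
  set T₁ := T.reparent a b ha hb
  have hT₁v : T₁.parent v = b := update_of_ne hav.symm _ _
  have ha₁ : a ∉ T₁.desc v := by
    refine T₁.notMem_desc_of_parent hav ?_
    rw [show T₁.parent a = b from update_self ..]
    rintro ⟨k, hk⟩
    rw [ParentTree.reparent_parent, T.iterate_update_of_notMem_desc b hb] at hk
    exact T.iterate_parent_notMem_desc hv_root 0 ⟨k, hk⟩
  have := hmst (T₁.reparent v a hv_root ha₁)
  rw [T₁.treeWeight_reparent f hv_root ha₁, hT₁v, T.treeWeight_reparent f ha hb, hpa,
    dist_comm (f v) (f a)] at this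
  linarith

theorem dist_le_of_nbr (hmst : IsMST T f) {a b v : V} (ha : Nbr T a v) (hb : Nbr T b v)
    (hab : a ≠ b) : dist (f a) (f v) ≤ dist (f a) (f b) := by
  obtain ⟨hav, hpa | hpv⟩ := ha
  · have ha_root : a ≠ T.root := T.ne_root_of_parent_ne (hpa ▸ hav.symm)
    have hb_desc : b ∉ T.desc a := by
      rcases hb.2 with hpb | hpv
      · refine T.notMem_desc_of_parent hab.symm ?_
        simpa [hpb, hpa] using T.iterate_parent_notMem_desc ha_root 0
      · simpa [hpa, hpv] using T.iterate_parent_notMem_desc ha_root 1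
    simpa [hpa] using hmst.dist_parent_le ha_root hb_desc
  · rcases hb.2 with hpb | hpv'
    · have := hmst.dist_parent_le_of_parent_eq hb.1 hpb (hpv ▸ hav)
      rwa [hpv, dist_comm (f v), dist_comm (f b)] at this
    · exact absurd (hpv.symm.trans hpv') hab

end IsMST

section Angle

variable {E : Type*} [NormedAddCommGroup E] [InnerProductSpace ℝ E] {x y : E}

theorem cos_angle_le_half (hx : x ≠ 0) (hy : y ≠ 0) (hxy : ‖x‖ ≤ ‖x - y‖)
    (hyx : ‖y‖ ≤ ‖y - x‖) : cos (angle x y) ≤ 1 / 2 := by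
  have hcos := norm_sub_sq_eq_norm_sq_add_norm_sq_sub_two_mul_norm_mul_norm_mul_cos_angle x y
  rw [norm_sub_rev] at hyx
  have ha := norm_pos_iff.2 hx
  have hb := norm_pos_iff.2 hy
  by_contra! h
  have h1 : ‖x‖ * ‖y‖ < ‖y‖ ^ 2 := by nlinarith [mul_pos ha hb]
  have h2 : ‖x‖ * ‖y‖ < ‖x‖ ^ 2 := by nlinarith [mul_pos ha hb]
  nlinarith

theorem norm_eq_and_norm_sub_eq_of_cos_angle_eq_half (hx : x ≠ 0) (hy : y ≠ 0)
    (hxy : ‖x‖ ≤ ‖x - y‖) (hyx : ‖y‖ ≤ ‖y - x‖) (h : cos (angle x y) = 1 / 2) :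
    ‖y‖ = ‖x‖ ∧ ‖x - y‖ = ‖x‖ := by
  have hcos := norm_sub_sq_eq_norm_sq_add_norm_sq_sub_two_mul_norm_mul_norm_mul_cos_angle x y
  rw [h] at hcos
  rw [norm_sub_rev] at hyx
  have ha := norm_pos_iff.2 hx
  have hb := norm_pos_iff.2 hy
  have hba : ‖y‖ ≤ ‖x‖ := by nlinarith
  have hab : ‖x‖ ≤ ‖y‖ := by nlinarith
  have hxy_eq : ‖y‖ = ‖x‖ := le_antisymm hba hab
  refine ⟨hxy_eq, ?_⟩
  rw [hxy_eq] at hcos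
  nlinarith [norm_nonneg (x - y)]

end Angle

theorem Complex.cos_angle_eq_cos_arg_sub {x y : ℂ} (hx : x ≠ 0) (hy : y ≠ 0) :
    Real.cos (angle x y) = Real.cos (x.arg - y.arg) := by
  rw [Complex.angle_eq_abs_arg hx hy, cos_abs, ← Angle.cos_coe, Complex.arg_div_coe_angle hx hy,
    ← Angle.coe_sub, Angle.cos_coe]

theorem pi_div_three_le_of_cos_le_half {y : ℝ} (hy : 0 ≤ y) (h : cos y ≤ 1 / 2) : π / 3 ≤ y := by
  by_contra! hlt
  have := cos_lt_cos_of_nonneg_of_le_pi hy (by linarith [pi_pos]) hlt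
  rw [cos_pi_div_three] at this
  linarith

open Fin.NatCast in
theorem Fin.apply_eq_apply_zero_of_apply_add_one {n : ℕ} [NeZero n] {α : Type*} (r : Fin n → α)
    (h : ∀ i, r (i + 1) = r i) (i : Fin n) : r i = r 0 := by
  have key : ∀ k : ℕ, r (k : Fin n) = r 0 := by
    intro k
    induction k with
    | zero => simp
    | succ k ih => rw [Nat.cast_succ, h, ih]
  simpa using key i

theorem exists_perm_cos_sub_add_one_eq_half (α : Fin 6 → ℝ) (hα : ∀ i, α i ∈ Set.Ioc (-π) π)
    (h : ∀ i j, i ≠ j → Real.cos (α i - α j) ≤ 1 / 2) :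
    ∃ σ : Equiv.Perm (Fin 6), ∀ i, Real.cos (α (σ i) - α (σ (i + 1))) = 1 / 2 := by
  have hinj : Injective α := fun i j hij => by
    by_contra hne
    have := h i j hne
    rw [hij, sub_self, cos_zero] at this
    norm_num at this
  set σ := Tuple.sort α
  have hσ : StrictMono (α ∘ σ) :=
    (Tuple.monotone_sort α).strictMono_of_injective (hinj.comp σ.injective)
  have gap : ∀ i j : Fin 6, i < j → π / 3 ≤ α (σ j) - α (σ i) := fun i j hij =>
    pi_div_three_le_of_cos_le_half (sub_nonneg.2 (hσ hij).le) (h _ _ (σ.injective.ne hij.ne'))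
  have gap_last : π / 3 ≤ α (σ 0) + 2 * π - α (σ 5) := by
    refine pi_div_three_le_of_cos_le_half (by linarith [(hα (σ 0)).1, (hα (σ 5)).2]) ?_
    rw [show α (σ 0) + 2 * π - α (σ 5) = α (σ 0) - α (σ 5) + 2 * π by ring, cos_add_two_pi]
    exact h _ _ (σ.injective.ne (by decide))
  -- the six cyclic gaps between the sorted arguments are at least `π / 3` and sum to `2π`
  have := gap 0 1 (by decide)
  have := gap 1 2 (by decide)
  have := gap 2 3 (by decide)
  have := gap 3 4 (by decide)
  have := gap 4 5 (by decide)
  have cos_eq_half : ∀ x, x = -(π / 3) ∨ x = -(π / 3) + 2 * π → Real.cos x = 1 / 2 := by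
    rintro x (rfl | rfl) <;> simp only [cos_add_two_pi, cos_neg, cos_pi_div_three]
  refine ⟨σ, fun i => cos_eq_half _ ?_⟩
  fin_cases i <;> simp only [Fin.reduceFinMk, Fin.reduceAdd, Fin.isValue]
  all_goals first | left; linarith | right; linarith

theorem Complex.exists_perm_regular_hexagon (w : Fin 6 → ℂ) (hw : ∀ i, w i ≠ 0)
    (hd : ∀ i j, i ≠ j → ‖w i‖ ≤ ‖w i - w j‖) :
    ∃ σ : Equiv.Perm (Fin 6), ∃ ρ : ℝ, 0 < ρ ∧ (∀ i, ‖w (σ i)‖ = ρ) ∧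
      ∀ i, ‖w (σ i) - w (σ (i + 1))‖ = ρ := by
  have hcos : ∀ i j, i ≠ j → Real.cos ((w i).arg - (w j).arg) ≤ 1 / 2 := fun i j hij => by
    rw [← cos_angle_eq_cos_arg_sub (hw i) (hw j)]
    exact cos_angle_le_half (hw i) (hw j) (hd i j hij) (hd j i hij.symm)
  obtain ⟨σ, hσ⟩ := exists_perm_cos_sub_add_one_eq_half (fun i => (w i).arg)
    (fun i => ⟨neg_pi_lt_arg _, arg_le_pi _⟩) hcos
  have hside : ∀ i, ‖w (σ (i + 1))‖ = ‖w (σ i)‖ ∧ ‖w (σ i) - w (σ (i + 1))‖ = ‖w (σ i)‖ := by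
    intro i
    have hne : σ i ≠ σ (i + 1) := σ.injective.ne (by simp)
    refine norm_eq_and_norm_sub_eq_of_cos_angle_eq_half (hw _) (hw _) (hd _ _ hne)
      (hd _ _ hne.symm) ?_
    rw [cos_angle_eq_cos_arg_sub (hw _) (hw _)]
    exact hσ i
  have hconst := Fin.apply_eq_apply_zero_of_apply_add_one (fun i => ‖w (σ i)‖) fun i => (hside i).1
  exact ⟨σ, ‖w (σ 0)‖, norm_pos_iff.2 (hw _), hconst, fun i => (hside i).2.trans (hconst i)⟩

theorem EuclideanSpace.exists_perm_regular_hexagon (c : EuclideanSpace ℝ (Fin 2))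
    (p : Fin 6 → EuclideanSpace ℝ (Fin 2)) (hp : ∀ i, p i ≠ c)
    (hd : ∀ i j, i ≠ j → dist (p i) c ≤ dist (p i) (p j)) :
    ∃ σ : Equiv.Perm (Fin 6), ∃ ρ : ℝ, 0 < ρ ∧ (∀ i, dist c (p (σ i)) = ρ) ∧
      ∀ i, dist (p (σ i)) (p (σ (i + 1))) = ρ := by
  set e := Complex.orthonormalBasisOneI.repr.symm
  have he : ∀ x y, dist x y = ‖e x - e y‖ := fun x y => by rw [← dist_eq_norm, e.dist_map]
  obtain ⟨σ, ρ, hρ, hrad, hside⟩ := Complex.exists_perm_regular_hexagon (fun i => e (p i) - e c)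
    (fun i => sub_ne_zero.2 (e.injective.ne (hp i))) fun i j hij => by
      simpa [he] using hd i j hij
  refine ⟨σ, ρ, hρ, fun i => ?_, fun i => ?_⟩
  · rw [dist_comm, he]
    exact hrad i
  · rw [he, ← hside i, sub_sub_sub_cancel_right]

theorem stmt17_general {V : Type} [Fintype V] [DecidableEq V]
    (f : V → EuclideanSpace ℝ (Fin 2))
    (hf : Function.Injective f)
    (T : ParentTree V) (hmst : IsMST T f) (v : V)
    (hdeg : {a : V | Nbr T a v}.ncard = 6) :
    ∃ g : Fin 6 → V, Function.Injective g ∧ Set.range g = {a : V | Nbr T a v} ∧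
      ∃ ρ : ℝ, 0 < ρ ∧ (∀ i : Fin 6, dist (f v) (f (g i)) = ρ) ∧
        ∀ i : Fin 6, dist (f (g i)) (f (g (i + 1))) = ρ := by
  set s := {a : V | Nbr T a v}
  let e : Fin 6 ≃ s := (finCongr (by rw [Nat.card_coe_set_eq, hdeg])).trans (Finite.equivFin s).symm
  obtain ⟨σ, ρ, hρ, hrad, hside⟩ := EuclideanSpace.exists_perm_regular_hexagon (f v)
    (fun i => f (e i)) (fun i => hf.ne (e i).2.1) fun i j hij =>
      hmst.dist_le_of_nbr (e i).2 (e j).2 (Subtype.val_injective.ne (e.injective.ne hij))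
  refine ⟨fun i => e (σ i), (Subtype.val_injective.comp e.injective).comp σ.injective, ?_,
    ρ, hρ, hrad, hside⟩
  change Set.range ((Subtype.val ∘ e) ∘ σ) = s
  rw [EquivLike.range_comp, EquivLike.range_comp, Subtype.range_coe]

/-- If a vertex `v` of a planar Euclidean minimum spanning tree has exactly 6
neighbours, then they are six equidistant points forming a regular hexagon
around `v`: they can be ordered `n₁, …, n₆` so that for some `ρ > 0`,
`dist(v, nᵢ) = ρ` for all `i` and `dist(nᵢ, n_{i+1}) = ρ` (indices mod 6). -/
theorem stmt17 {V : Type} [Fintype V] [DecidableEq V]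
    (hn : 3 ≤ Fintype.card V) (f : V → EuclideanSpace ℝ (Fin 2))
    (hf : Function.Injective f)
    (T : ParentTree V) (hmst : IsMST T f) (v : V)
    (hdeg : {a : V | Nbr T a v}.ncard = 6) :
    ∃ g : Fin 6 → V, Function.Injective g ∧ Set.range g = {a : V | Nbr T a v} ∧
      ∃ ρ : ℝ, 0 < ρ ∧ (∀ i : Fin 6, dist (f v) (f (g i)) = ρ) ∧
        ∀ i : Fin 6, dist (f (g i)) (f (g (i + 1))) = ρ :=
  stmt17_general f hf T hmst v hdeg
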